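/- arXiv:1405.6767 — 3 statements merged into one kernel-verified Lean document; each statement's English description precedes it below -/
import Mathlib

section
/- The braidings c satisfy the hexagon-type identity a⁻¹ ∘ c_{M⊗N,P} ∘ a⁻¹ = (c_{M,ᴺP}⊗id_N) ∘ a⁻¹ ∘ (id_M ⊗ c_{N,P}), where a denotes the Hom-associativity constraint ã_{M,N,P}((m⊗n)⊗p) = μ(m)⊗(n⊗ς⁻¹(p)) and c_{M,N}(m⊗n) = ν(n₍₀₎)⊗B⁻¹(n₍₁₎)·μ⁻¹(m). -/
open TensorProduct

/-- A monoidal Hom-Hopf algebra (with bijective antipode) over a field `k`. -/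
structure HomHopf (k : Type*) [Field k] (H : Type*) [AddCommGroup H] [Module k H] where
  mul : H →ₗ[k] H →ₗ[k] H
  one : H
  a : H ≃ₗ[k] H
  comul : H →ₗ[k] H ⊗[k] H
  counit : H →ₗ[k] k
  S : H ≃ₗ[k] H
  hom_assoc : ∀ x y z : H, mul (a x) (mul y z) = mul (mul x y) (a z)
  a_mul : ∀ x y : H, a (mul x y) = mul (a x) (a y)
  mul_one' : ∀ x : H, mul x one = a x
  one_mul' : ∀ x : H, mul one x = a x
  a_one : a one = one
  hom_coassoc : (TensorProduct.map a.symm.toLinearMap comul).comp comul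
      = (TensorProduct.assoc k H H H).toLinearMap.comp
          ((TensorProduct.map comul a.symm.toLinearMap).comp comul)
  comul_a : ∀ x : H, comul (a x) = TensorProduct.map a.toLinearMap a.toLinearMap (comul x)
  counit_comul : ∀ x : H,
    (TensorProduct.lid k H) ((TensorProduct.map counit LinearMap.id) (comul x)) = a.symm x
  comul_counit : ∀ x : H,
    (TensorProduct.rid k H) ((TensorProduct.map LinearMap.id counit) (comul x)) = a.symm x
  counit_a : ∀ x : H, counit (a x) = counit x
  comul_mul : ∀ x y : H, comul (mul x y)
      = (TensorProduct.map (TensorProduct.lift mul) (TensorProduct.lift mul))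
          ((TensorProduct.tensorTensorTensorComm k H H H H) (comul x ⊗ₜ[k] comul y))
  comul_one : comul one = one ⊗ₜ[k] one
  counit_mul : ∀ x y : H, counit (mul x y) = counit x * counit y
  counit_one : counit one = 1
  S_a : ∀ x : H, S (a x) = a (S x)
  antipode_left : ∀ x : H,
    (TensorProduct.lift mul) ((TensorProduct.map S.toLinearMap LinearMap.id) (comul x))
      = counit x • one
  antipode_right : ∀ x : H,
    (TensorProduct.lift mul) ((TensorProduct.map LinearMap.id S.toLinearMap) (comul x))
      = counit x • one

/-- A monoidal Hom-Hopf algebra automorphism. -/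
structure IsHomHopfAuto {k : Type*} [Field k] {H : Type*} [AddCommGroup H] [Module k H]
    (HH : HomHopf k H) (f : H ≃ₗ[k] H) : Prop where
  map_mul : ∀ x y : H, f (HH.mul x y) = HH.mul (f x) (f y)
  map_one : f HH.one = HH.one
  map_comul : ∀ x : H, HH.comul (f x)
      = TensorProduct.map f.toLinearMap f.toLinearMap (HH.comul x)
  map_counit : ∀ x : H, HH.counit (f x) = HH.counit x
  map_a : ∀ x : H, f (HH.a x) = HH.a (f x)

/-- A left-right (A,B)-Yetter-Drinfeld Hom-module over `HH`. -/
structure YDModule {k : Type*} [Field k] {H : Type*} [AddCommGroup H] [Module k H]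
    (HH : HomHopf k H) (A B : H ≃ₗ[k] H)
    (M : Type*) [AddCommGroup M] [Module k M] where
  act : H →ₗ[k] M →ₗ[k] M
  coact : M →ₗ[k] M ⊗[k] H
  mu : M ≃ₗ[k] M
  hom_act : ∀ (h g : H) (m : M), act (HH.a h) (act g m) = act (HH.mul h g) (mu m)
  mu_act : ∀ (h : H) (m : M), mu (act h m) = act (HH.a h) (mu m)
  one_act : ∀ m : M, act HH.one m = mu m
  hom_coact : (TensorProduct.map mu.symm.toLinearMap HH.comul).comp coact
      = (TensorProduct.assoc k M H H).toLinearMap.comp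
          ((TensorProduct.map coact HH.a.symm.toLinearMap).comp coact)
  coact_mu : ∀ m : M, coact (mu m)
      = TensorProduct.map mu.toLinearMap HH.a.toLinearMap (coact m)
  coact_counit : ∀ m : M,
    (TensorProduct.rid k M) ((TensorProduct.map LinearMap.id HH.counit) (coact m)) = mu.symm m
  compat : ∀ (h : H) (m : M) (n : ℕ) (h1 h2 : Fin n → H),
      HH.comul h = ∑ i, h1 i ⊗ₜ[k] h2 i →
      ∀ (p : ℕ) (h21 h22 : Fin n → Fin p → H),
      (∀ i, HH.comul (h2 i) = ∑ j, h21 i j ⊗ₜ[k] h22 i j) →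
      ∀ (q : ℕ) (m0 : Fin q → M) (m1 : Fin q → H),
      coact m = ∑ l, m0 l ⊗ₜ[k] m1 l →
      coact (act h m) = ∑ i, ∑ j, ∑ l,
        act (HH.a (h21 i j)) (m0 l) ⊗ₜ[k]
          HH.mul (HH.mul (B (h22 i j)) (HH.a.symm (m1 l))) (A (HH.S.symm (h1 i)))

/-!
Evaluated at `m ⊗ (x ⊗ p)`, the defining formulas of the braidings and of the diagonal action
on `M ⊗ N` turn both sides into one and the same expression in the iterated coaction `ρ` of `p`:
the left side reaches it through `(μ⁻¹ ⊗ Δ) ρ(p)`, the right side through the reassociated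
`(ρ ⊗ HH.a⁻¹) ρ(p)`. These agree by the Hom-coassociativity of the coaction of `P`.
-/

theorem TensorProduct.eq_map_of_forall_sum_tmul_eq {R V W V' W' : Type*} [CommRing R]
    [AddCommGroup V] [Module R V] [AddCommGroup W] [Module R W]
    [AddCommGroup V'] [Module R V'] [AddCommGroup W'] [Module R W']
    {f : V →ₗ[R] V'} {g : W →ₗ[R] W'} {t : V ⊗[R] W} {y : V' ⊗[R] W'}
    (h : ∀ (q : ℕ) (a : Fin q → V) (b : Fin q → W),
      t = ∑ i, a i ⊗ₜ[R] b i → y = ∑ i, f (a i) ⊗ₜ[R] g (b i)) :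
    y = map f g t := by
  obtain ⟨q, a, b, rfl⟩ := exists_sum_tmul_eq t
  simp [h q a b rfl]

section

variable {k : Type*} [Field k] {H : Type*} [AddCommGroup H] [Module k H] {HH : HomHopf k H}

theorem IsHomHopfAuto.comul_symm {f : H ≃ₗ[k] H} (hf : IsHomHopfAuto HH f) (x : H) :
    HH.comul (f.symm x) = map f.symm.toLinearMap f.symm.toLinearMap (HH.comul x) := by
  conv_rhs => rw [← f.apply_symm_apply x, hf.map_comul, ← LinearMap.comp_apply, ← map_comp]
  simp

theorem YDModule.map_comul_coact {A B : H ≃ₗ[k] H} {M : Type*} [AddCommGroup M] [Module k M]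
    (Y : YDModule HH A B M) (m : M) :
    map Y.mu.symm.toLinearMap HH.comul (Y.coact m)
      = TensorProduct.assoc k M H H (map Y.coact HH.a.symm.toLinearMap (Y.coact m)) := by
  simpa using LinearMap.congr_fun Y.hom_coact m

end

section Hexagon

variable {k : Type*} [Field k] {H : Type*} [AddCommGroup H] [Module k H]
  {M : Type*} [AddCommGroup M] [Module k M] {N : Type*} [AddCommGroup N] [Module k N]
  {P : Type*} [AddCommGroup P] [Module k P]
  {HH : HomHopf k H} {A B C D E F : H ≃ₗ[k] H}
  (YM : YDModule HH A B M) (YN : YDModule HH C D N) (YP : YDModule HH E F P)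

def hexagonValue (m : M) (x : N) : P ⊗[k] (H ⊗[k] H) →ₗ[k] (P ⊗[k] M) ⊗[k] N :=
  (TensorProduct.assoc k P M N).symm.toLinearMap ∘ₗ
    map (YP.mu.toLinearMap ∘ₗ YP.mu.toLinearMap)
      (map (YM.act.flip (YM.mu.symm (YM.mu.symm m)) ∘ₗ
          (B.symm.toLinearMap ∘ₗ C.toLinearMap ∘ₗ D.symm.toLinearMap ∘ₗ HH.a.toLinearMap))
        (YN.act.flip x ∘ₗ (HH.a.toLinearMap ∘ₗ D.symm.toLinearMap ∘ₗ HH.a.toLinearMap)))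

theorem hexagonValue_tmul (m : M) (x : N) (p : P) (h g : H) :
    hexagonValue YM YN YP m x (p ⊗ₜ (h ⊗ₜ g))
      = (YP.mu (YP.mu p) ⊗ₜ YM.act (B.symm (C (D.symm (HH.a h)))) (YM.mu.symm (YM.mu.symm m)))
          ⊗ₜ YN.act (HH.a (D.symm (HH.a g))) x :=
  rfl

theorem hexagon_lhs_tmul (hB : IsHomHopfAuto HH B) (hC : IsHomHopfAuto HH C)
    (hD : IsHomHopfAuto HH D) (actMN : H →ₗ[k] (M ⊗[k] N) →ₗ[k] (M ⊗[k] N))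
    (hactMN : ∀ (h : H) (m : M) (x : N) (n : ℕ) (h1 h2 : Fin n → H),
      HH.comul h = ∑ i, h1 i ⊗ₜ[k] h2 i →
      actMN h (m ⊗ₜ[k] x)
        = ∑ i, YM.act (C (h1 i)) m ⊗ₜ[k] YN.act (C.symm (B (C (h2 i)))) x)
    (cMN_P : ((M ⊗[k] N) ⊗[k] P) →ₗ[k] (P ⊗[k] (M ⊗[k] N)))
    (hcMN_P : ∀ (m : M) (x : N) (pp : P) (q : ℕ) (p0 : Fin q → P) (p1 : Fin q → H),
      YP.coact pp = ∑ l, p0 l ⊗ₜ[k] p1 l →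
      cMN_P ((m ⊗ₜ[k] x) ⊗ₜ[k] pp)
        = ∑ l, YP.mu (p0 l) ⊗ₜ[k]
            actMN (C.symm (B.symm (C (D.symm (p1 l))))) (YM.mu.symm m ⊗ₜ[k] YN.mu.symm x))
    (m : M) (x : N) (p : P) :
    (TensorProduct.assoc k P M N).symm
        (map YP.mu.symm.toLinearMap (map LinearMap.id YN.mu.toLinearMap)
          (cMN_P ((YM.mu.symm m ⊗ₜ x) ⊗ₜ YP.mu p)))
      = hexagonValue YM YN YP m x (map YP.mu.symm.toLinearMap HH.comul (YP.coact p)) := by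
  have hc : cMN_P ((YM.mu.symm m ⊗ₜ x) ⊗ₜ YP.mu p)
      = map YP.mu.toLinearMap (actMN.flip (YM.mu.symm (YM.mu.symm m) ⊗ₜ YN.mu.symm x) ∘ₗ
          (C.symm.toLinearMap ∘ₗ B.symm.toLinearMap ∘ₗ C.toLinearMap ∘ₗ D.symm.toLinearMap))
        (YP.coact (YP.mu p)) :=
    eq_map_of_forall_sum_tmul_eq (hcMN_P _ _ _)
  rw [hc, YP.coact_mu]
  induction YP.coact p using TensorProduct.induction_on with
  | zero => simp
  | add s t hs ht => simp only [map_add, hs, ht]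
  | tmul p₀ h =>
    simp only [map_tmul, LinearMap.comp_apply, LinearMap.flip_apply, LinearEquiv.coe_coe,
      LinearEquiv.symm_apply_apply]
    have ha : ∀ g m' x', actMN g (m' ⊗ₜ x') = map (YM.act.flip m' ∘ₗ C.toLinearMap)
        (YN.act.flip x' ∘ₗ (C.symm.toLinearMap ∘ₗ B.toLinearMap ∘ₗ C.toLinearMap)) (HH.comul g) :=
      fun g m' x' => eq_map_of_forall_sum_tmul_eq (hactMN g m' x')
    rw [ha, hC.comul_symm, hB.comul_symm, hC.map_comul, hD.comul_symm, HH.comul_a]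
    induction HH.comul h using TensorProduct.induction_on with
    | zero => simp
    | add s t hs ht => simp only [map_add, tmul_add, hs, ht]
    | tmul h₁ h₂ => simp [hexagonValue_tmul, YN.mu_act]

theorem hexagon_rhs_tmul (cNP : (N ⊗[k] P) →ₗ[k] (P ⊗[k] N))
    (hcNP : ∀ (x : N) (pp : P) (q : ℕ) (p0 : Fin q → P) (p1 : Fin q → H),
      YP.coact pp = ∑ l, p0 l ⊗ₜ[k] p1 l →
      cNP (x ⊗ₜ[k] pp) = ∑ l, YP.mu (p0 l) ⊗ₜ[k] YN.act (D.symm (p1 l)) (YN.mu.symm x))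
    (cM_NP : (M ⊗[k] P) →ₗ[k] (P ⊗[k] M))
    (hcM_NP : ∀ (m : M) (pp : P) (q : ℕ) (p0 : Fin q → P) (p1 : Fin q → H),
      YP.coact pp = ∑ l, p0 l ⊗ₜ[k] p1 l →
      cM_NP (m ⊗ₜ[k] pp)
        = ∑ l, YP.mu (p0 l) ⊗ₜ[k] YM.act (B.symm (C (D.symm (p1 l)))) (YM.mu.symm m))
    (m : M) (x : N) (p : P) :
    map cM_NP LinearMap.id ((TensorProduct.assoc k M P N).symm
        (YM.mu.symm m ⊗ₜ map LinearMap.id YN.mu.toLinearMap (cNP (x ⊗ₜ p))))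
      = hexagonValue YM YN YP m x
          (TensorProduct.assoc k P H H (map YP.coact HH.a.symm.toLinearMap (YP.coact p))) := by
  have hc : cNP (x ⊗ₜ p) = map YP.mu.toLinearMap
      (YN.act.flip (YN.mu.symm x) ∘ₗ D.symm.toLinearMap) (YP.coact p) :=
    eq_map_of_forall_sum_tmul_eq (hcNP _ _)
  rw [hc]
  induction YP.coact p using TensorProduct.induction_on with
  | zero => simp
  | add s t hs ht => simp only [map_add, tmul_add, hs, ht]
  | tmul p₀ h =>
    have hc' : cM_NP (YM.mu.symm m ⊗ₜ YP.mu p₀) = map YP.mu.toLinearMap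
        (YM.act.flip (YM.mu.symm (YM.mu.symm m)) ∘ₗ
          (B.symm.toLinearMap ∘ₗ C.toLinearMap ∘ₗ D.symm.toLinearMap))
        (YP.coact (YP.mu p₀)) :=
      eq_map_of_forall_sum_tmul_eq (hcM_NP _ _)
    simp only [map_tmul, LinearMap.comp_apply, LinearMap.flip_apply, LinearEquiv.coe_coe,
      LinearMap.id_coe, id_eq, assoc_symm_tmul]
    rw [hc', YP.coact_mu]
    induction YP.coact p₀ using TensorProduct.induction_on with
    | zero => simp
    | add s t hs ht => simp only [map_add, add_tmul, hs, ht]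
    | tmul p₀₀ h₀ => simp [hexagonValue_tmul, YN.mu_act]

end Hexagon

theorem stmt_14_general {k : Type*} [Field k] {H : Type*} [AddCommGroup H] [Module k H]
    {M : Type*} [AddCommGroup M] [Module k M] {N : Type*} [AddCommGroup N] [Module k N]
    {P : Type*} [AddCommGroup P] [Module k P]
    (HH : HomHopf k H) (A B C D E F : H ≃ₗ[k] H)
    (hB : IsHomHopfAuto HH B)
    (hC : IsHomHopfAuto HH C) (hD : IsHomHopfAuto HH D)
    (YM : YDModule HH A B M) (YN : YDModule HH C D N) (YP : YDModule HH E F P)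
    -- the action of H on M⊗N (Proposition 3.1)
    (actMN : H →ₗ[k] (M ⊗[k] N) →ₗ[k] (M ⊗[k] N))
    (hactMN : ∀ (h : H) (m : M) (x : N) (n : ℕ) (h1 h2 : Fin n → H),
      HH.comul h = ∑ i, h1 i ⊗ₜ[k] h2 i →
      actMN h (m ⊗ₜ[k] x)
        = ∑ i, YM.act (C (h1 i)) m ⊗ₜ[k] YN.act (C.symm (B (C (h2 i)))) x)
    -- c_{M⊗N,P}, with (M⊗N) of type (AC, DC⁻¹BC)
    (cMN_P : ((M ⊗[k] N) ⊗[k] P) →ₗ[k] (P ⊗[k] (M ⊗[k] N)))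
    (hcMN_P : ∀ (m : M) (x : N) (pp : P) (q : ℕ) (p0 : Fin q → P) (p1 : Fin q → H),
      YP.coact pp = ∑ l, p0 l ⊗ₜ[k] p1 l →
      cMN_P ((m ⊗ₜ[k] x) ⊗ₜ[k] pp)
        = ∑ l, YP.mu (p0 l) ⊗ₜ[k]
            actMN (C.symm (B.symm (C (D.symm (p1 l))))) (YM.mu.symm m ⊗ₜ[k] YN.mu.symm x))
    -- c_{N,P}
    (cNP : (N ⊗[k] P) →ₗ[k] (P ⊗[k] N))
    (hcNP : ∀ (x : N) (pp : P) (q : ℕ) (p0 : Fin q → P) (p1 : Fin q → H),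
      YP.coact pp = ∑ l, p0 l ⊗ₜ[k] p1 l →
      cNP (x ⊗ₜ[k] pp) = ∑ l, YP.mu (p0 l) ⊗ₜ[k] YN.act (D.symm (p1 l)) (YN.mu.symm x))
    -- c_{M,ᴺP}, where ᴺP has coaction p ↦ p₍₀₎ ⊗ CD⁻¹(p₍₁₎)
    (cM_NP : (M ⊗[k] P) →ₗ[k] (P ⊗[k] M))
    (hcM_NP : ∀ (m : M) (pp : P) (q : ℕ) (p0 : Fin q → P) (p1 : Fin q → H),
      YP.coact pp = ∑ l, p0 l ⊗ₜ[k] p1 l →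
      cM_NP (m ⊗ₜ[k] pp)
        = ∑ l, YP.mu (p0 l) ⊗ₜ[k] YM.act (B.symm (C (D.symm (p1 l)))) (YM.mu.symm m)) :
    ∀ w : M ⊗[k] (N ⊗[k] P),
      ((TensorProduct.assoc k P M N).symm.toLinearMap ∘ₗ
        TensorProduct.map YP.mu.symm.toLinearMap
          (TensorProduct.map LinearMap.id YN.mu.toLinearMap))
        (cMN_P
          (((TensorProduct.assoc k M N P).symm.toLinearMap ∘ₗ
            TensorProduct.map YM.mu.symm.toLinearMap
              (TensorProduct.map LinearMap.id YP.mu.toLinearMap)) w))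
      = (TensorProduct.map cM_NP LinearMap.id)
          (((TensorProduct.assoc k M P N).symm.toLinearMap ∘ₗ
            TensorProduct.map YM.mu.symm.toLinearMap
              (TensorProduct.map LinearMap.id YN.mu.toLinearMap))
            ((TensorProduct.map LinearMap.id cNP) w)) := by
  intro w
  induction w using TensorProduct.induction_on with
  | zero => simp
  | add s t hs ht => simp only [map_add, LinearMap.comp_apply] at hs ht ⊢; rw [hs, ht]
  | tmul m y =>
    induction y using TensorProduct.induction_on with
    | zero => simp
    | add s t hs ht =>
      simp only [tmul_add, map_add, LinearMap.comp_apply] at hs ht ⊢; rw [hs, ht]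
    | tmul x p =>
      simp only [LinearMap.comp_apply, map_tmul, LinearEquiv.coe_coe, LinearMap.id_coe, id_eq,
        assoc_symm_tmul]
      rw [hexagon_lhs_tmul YM YN YP hB hC hD actMN hactMN cMN_P hcMN_P,
        hexagon_rhs_tmul YM YN YP cNP hcNP cM_NP hcM_NP, YP.map_comul_coact]

/-- Eq. (3.4): a⁻¹_{ᴹ⊗ᴺP,M,N} ∘ c_{M⊗N,P} ∘ a⁻¹_{M,N,P}
 = (c_{M,ᴺP}⊗id_N) ∘ a⁻¹_{M,ᴺP,N} ∘ (id_M ⊗ c_{N,P}),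
with a⁻¹_{X,Y,Z}(x⊗(y⊗z)) = (μX⁻¹(x)⊗y)⊗μZ(z). -/
theorem stmt_14 {k : Type*} [Field k] {H : Type*} [AddCommGroup H] [Module k H]
    {M : Type*} [AddCommGroup M] [Module k M] {N : Type*} [AddCommGroup N] [Module k N]
    {P : Type*} [AddCommGroup P] [Module k P]
    (HH : HomHopf k H) (A B C D E F : H ≃ₗ[k] H)
    (hA : IsHomHopfAuto HH A) (hB : IsHomHopfAuto HH B)
    (hC : IsHomHopfAuto HH C) (hD : IsHomHopfAuto HH D)
    (hE : IsHomHopfAuto HH E) (hF : IsHomHopfAuto HH F)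
    (YM : YDModule HH A B M) (YN : YDModule HH C D N) (YP : YDModule HH E F P)
    -- the action of H on M⊗N (Proposition 3.1)
    (actMN : H →ₗ[k] (M ⊗[k] N) →ₗ[k] (M ⊗[k] N))
    (hactMN : ∀ (h : H) (m : M) (x : N) (n : ℕ) (h1 h2 : Fin n → H),
      HH.comul h = ∑ i, h1 i ⊗ₜ[k] h2 i →
      actMN h (m ⊗ₜ[k] x)
        = ∑ i, YM.act (C (h1 i)) m ⊗ₜ[k] YN.act (C.symm (B (C (h2 i)))) x)
    -- c_{M⊗N,P}, with (M⊗N) of type (AC, DC⁻¹BC)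
    (cMN_P : ((M ⊗[k] N) ⊗[k] P) →ₗ[k] (P ⊗[k] (M ⊗[k] N)))
    (hcMN_P : ∀ (m : M) (x : N) (pp : P) (q : ℕ) (p0 : Fin q → P) (p1 : Fin q → H),
      YP.coact pp = ∑ l, p0 l ⊗ₜ[k] p1 l →
      cMN_P ((m ⊗ₜ[k] x) ⊗ₜ[k] pp)
        = ∑ l, YP.mu (p0 l) ⊗ₜ[k]
            actMN (C.symm (B.symm (C (D.symm (p1 l))))) (YM.mu.symm m ⊗ₜ[k] YN.mu.symm x))
    -- c_{N,P}
    (cNP : (N ⊗[k] P) →ₗ[k] (P ⊗[k] N))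
    (hcNP : ∀ (x : N) (pp : P) (q : ℕ) (p0 : Fin q → P) (p1 : Fin q → H),
      YP.coact pp = ∑ l, p0 l ⊗ₜ[k] p1 l →
      cNP (x ⊗ₜ[k] pp) = ∑ l, YP.mu (p0 l) ⊗ₜ[k] YN.act (D.symm (p1 l)) (YN.mu.symm x))
    -- c_{M,ᴺP}, where ᴺP has coaction p ↦ p₍₀₎ ⊗ CD⁻¹(p₍₁₎)
    (cM_NP : (M ⊗[k] P) →ₗ[k] (P ⊗[k] M))
    (hcM_NP : ∀ (m : M) (pp : P) (q : ℕ) (p0 : Fin q → P) (p1 : Fin q → H),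
      YP.coact pp = ∑ l, p0 l ⊗ₜ[k] p1 l →
      cM_NP (m ⊗ₜ[k] pp)
        = ∑ l, YP.mu (p0 l) ⊗ₜ[k] YM.act (B.symm (C (D.symm (p1 l)))) (YM.mu.symm m)) :
    ∀ w : M ⊗[k] (N ⊗[k] P),
      ((TensorProduct.assoc k P M N).symm.toLinearMap ∘ₗ
        TensorProduct.map YP.mu.symm.toLinearMap
          (TensorProduct.map LinearMap.id YN.mu.toLinearMap))
        (cMN_P
          (((TensorProduct.assoc k M N P).symm.toLinearMap ∘ₗ
            TensorProduct.map YM.mu.symm.toLinearMap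
              (TensorProduct.map LinearMap.id YP.mu.toLinearMap)) w))
      = (TensorProduct.map cM_NP LinearMap.id)
          (((TensorProduct.assoc k M P N).symm.toLinearMap ∘ₗ
            TensorProduct.map YM.mu.symm.toLinearMap
              (TensorProduct.map LinearMap.id YN.mu.toLinearMap))
            ((TensorProduct.map LinearMap.id cNP) w)) :=
  stmt_14_general HH A B C D E F hB hC hD YM YN YP actMN hactMN cMN_P hcMN_P cNP hcNP cM_NP hcM_NP
end

section
/- The braidings c satisfy the second hexagon-type identity a ∘ c_{M,N⊗P} ∘ a = (id_{ᴹN} ⊗ c_{M,P}) ∘ a ∘ (c_{M,N}⊗id_P), where a is the Hom-associativity constraint and c_{M,N}(m⊗n) = ν(n₍₀₎)⊗B⁻¹(n₍₁₎)·μ⁻¹(m). -/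
/-! Both sides are linear, so it suffices to compare them on `(m ⊗ n) ⊗ p`. Writing
`ρ(n) = Σ n₀ ⊗ n₁` and `ρ(μ⁻¹ p) = Σ p₀ ⊗ p₁`, both sides expand to the double sum
`Σ μ²(n₀) ⊗ (μ(p₀) ⊗ -)`, with last factors `μ⁻¹(B⁻¹(p₁ n₁) · m)` and
`B⁻¹p₁ · μ⁻¹(B⁻¹n₁ · μ⁻¹m)`. These agree by Hom-associativity of the action, since `B` and `α`
are multiplicative. -/

open TensorProduct

theorem TensorProduct.exists_fin_sum_tmul {R X Y : Type*} [CommSemiring R] [AddCommMonoid X]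
    [Module R X] [AddCommMonoid Y] [Module R Y] (x : X ⊗[R] Y) :
    ∃ (n : ℕ) (f : Fin n → X) (g : Fin n → Y), x = ∑ i, f i ⊗ₜ[R] g i := by
  obtain ⟨S, rfl⟩ := TensorProduct.exists_finset x
  refine ⟨S.card, fun i => (S.equivFin.symm i).1.1, fun i => (S.equivFin.symm i).1.2, ?_⟩
  rw [← Finset.sum_coe_sort S, ← Equiv.sum_comp S.equivFin.symm]

section

variable {k : Type*} [Field k] {H : Type*} [AddCommGroup H] [Module k H] {HH : HomHopf k H}

theorem HomHopf.a_symm_mul (x y : H) :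
    HH.a.symm (HH.mul x y) = HH.mul (HH.a.symm x) (HH.a.symm y) :=
  HH.a.injective <| by simp only [HH.a_mul, LinearEquiv.apply_symm_apply]

theorem IsHomHopfAuto.symm_mul {f : H ≃ₗ[k] H} (hf : IsHomHopfAuto HH f) (x y : H) :
    f.symm (HH.mul x y) = HH.mul (f.symm x) (f.symm y) :=
  f.injective <| by simp only [hf.map_mul, LinearEquiv.apply_symm_apply]

variable {M : Type*} [AddCommGroup M] [Module k M] {A B : H ≃ₗ[k] H}

theorem YDModule.mu_symm_act (YM : YDModule HH A B M) (h : H) (m : M) :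
    YM.mu.symm (YM.act h m) = YM.act (HH.a.symm h) (YM.mu.symm m) :=
  YM.mu.injective <| by simp only [YM.mu_act, LinearEquiv.apply_symm_apply]

theorem YDModule.mu_symm_act_symm_mul (YM : YDModule HH A B M) (hB : IsHomHopfAuto HH B)
    (m : M) (x y : H) :
    YM.mu.symm (YM.act (B.symm (HH.mul x y)) m)
      = YM.act (B.symm x) (YM.mu.symm (YM.act (B.symm y) (YM.mu.symm m))) := by
  have := YM.hom_act (HH.a.symm (B.symm x)) (HH.a.symm (B.symm y)) (YM.mu.symm (YM.mu.symm m))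
  rw [LinearEquiv.apply_symm_apply, LinearEquiv.apply_symm_apply] at this
  rw [YM.mu_symm_act, YM.mu_symm_act, hB.symm_mul, HH.a_symm_mul, ← this]

end

theorem stmt_15_general {k : Type*} [Field k] {H : Type*} [AddCommGroup H] [Module k H]
    {M : Type*} [AddCommGroup M] [Module k M] {N : Type*} [AddCommGroup N] [Module k N]
    {P : Type*} [AddCommGroup P] [Module k P]
    (HH : HomHopf k H) (A B C D E F : H ≃ₗ[k] H)
    (hB : IsHomHopfAuto HH B)
    (YM : YDModule HH A B M) (YN : YDModule HH C D N) (YP : YDModule HH E F P)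
    -- c_{M,N⊗P}, where N⊗P has the codiagonal coaction (n⊗p) ↦ (n₍₀₎⊗p₍₀₎)⊗p₍₁₎n₍₁₎
    (cM_NP : (M ⊗[k] (N ⊗[k] P)) →ₗ[k] ((N ⊗[k] P) ⊗[k] M))
    (hcM_NP : ∀ (m : M) (x : N) (pp : P) (q : ℕ) (n0 : Fin q → N) (n1 : Fin q → H),
      YN.coact x = ∑ l, n0 l ⊗ₜ[k] n1 l →
      ∀ (r : ℕ) (p0 : Fin r → P) (p1 : Fin r → H),
      YP.coact pp = ∑ t, p0 t ⊗ₜ[k] p1 t →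
      cM_NP (m ⊗ₜ[k] (x ⊗ₜ[k] pp))
        = ∑ l, ∑ t, (YN.mu (n0 l) ⊗ₜ[k] YP.mu (p0 t)) ⊗ₜ[k]
            YM.act (B.symm (HH.mul (p1 t) (n1 l))) (YM.mu.symm m))
    -- c_{M,N}
    (cMN : (M ⊗[k] N) →ₗ[k] (N ⊗[k] M))
    (hcMN : ∀ (m : M) (x : N) (q : ℕ) (n0 : Fin q → N) (n1 : Fin q → H),
      YN.coact x = ∑ l, n0 l ⊗ₜ[k] n1 l →
      cMN (m ⊗ₜ[k] x) = ∑ l, YN.mu (n0 l) ⊗ₜ[k] YM.act (B.symm (n1 l)) (YM.mu.symm m))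
    -- c_{M,P}
    (cMP : (M ⊗[k] P) →ₗ[k] (P ⊗[k] M))
    (hcMP : ∀ (m : M) (pp : P) (r : ℕ) (p0 : Fin r → P) (p1 : Fin r → H),
      YP.coact pp = ∑ t, p0 t ⊗ₜ[k] p1 t →
      cMP (m ⊗ₜ[k] pp) = ∑ t, YP.mu (p0 t) ⊗ₜ[k] YM.act (B.symm (p1 t)) (YM.mu.symm m)) :
    ∀ w : (M ⊗[k] N) ⊗[k] P,
      ((TensorProduct.map YN.mu.toLinearMap
          (TensorProduct.map LinearMap.id YM.mu.symm.toLinearMap)) ∘ₗ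
        (TensorProduct.assoc k N P M).toLinearMap)
        (cM_NP
          (((TensorProduct.map YM.mu.toLinearMap
              (TensorProduct.map LinearMap.id YP.mu.symm.toLinearMap)) ∘ₗ
            (TensorProduct.assoc k M N P).toLinearMap) w))
      = (TensorProduct.map LinearMap.id cMP)
          (((TensorProduct.map YN.mu.toLinearMap
              (TensorProduct.map LinearMap.id YP.mu.symm.toLinearMap)) ∘ₗ
            (TensorProduct.assoc k N M P).toLinearMap)
            ((TensorProduct.map cMN LinearMap.id) w)) := by
  intro w
  simp only [← LinearMap.comp_apply]
  refine LinearMap.congr_fun (TensorProduct.ext_threefold fun m n p => ?_) w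
  obtain ⟨q, n0, n1, hn⟩ := TensorProduct.exists_fin_sum_tmul (YN.coact n)
  obtain ⟨r, p0, p1, hp⟩ := TensorProduct.exists_fin_sum_tmul (YP.coact (YP.mu.symm p))
  simp only [LinearMap.comp_apply, LinearEquiv.coe_coe, TensorProduct.assoc_tmul,
    TensorProduct.map_tmul, LinearMap.id_apply, hcM_NP _ n _ q n0 n1 hn r p0 p1 hp,
    hcMN m n q n0 n1 hn, TensorProduct.sum_tmul, map_sum,
    hcMP _ _ r p0 p1 hp, TensorProduct.tmul_sum, LinearEquiv.symm_apply_apply,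
    YM.mu_symm_act_symm_mul hB]

/-- Eq. (3.5): a_{ᴹN,ᴹP,M} ∘ c_{M,N⊗P} ∘ a_{M,N,P}
 = (id_{ᴹN} ⊗ c_{M,P}) ∘ a_{ᴹN,M,P} ∘ (c_{M,N}⊗id_P),
with a_{X,Y,Z}((x⊗y)⊗z) = μX(x)⊗(y⊗μZ⁻¹(z)). -/
theorem stmt_15 {k : Type*} [Field k] {H : Type*} [AddCommGroup H] [Module k H]
    {M : Type*} [AddCommGroup M] [Module k M] {N : Type*} [AddCommGroup N] [Module k N]
    {P : Type*} [AddCommGroup P] [Module k P]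
    (HH : HomHopf k H) (A B C D E F : H ≃ₗ[k] H)
    (hA : IsHomHopfAuto HH A) (hB : IsHomHopfAuto HH B)
    (hC : IsHomHopfAuto HH C) (hD : IsHomHopfAuto HH D)
    (hE : IsHomHopfAuto HH E) (hF : IsHomHopfAuto HH F)
    (YM : YDModule HH A B M) (YN : YDModule HH C D N) (YP : YDModule HH E F P)
    -- c_{M,N⊗P}, where N⊗P has the codiagonal coaction (n⊗p) ↦ (n₍₀₎⊗p₍₀₎)⊗p₍₁₎n₍₁₎
    (cM_NP : (M ⊗[k] (N ⊗[k] P)) →ₗ[k] ((N ⊗[k] P) ⊗[k] M))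
    (hcM_NP : ∀ (m : M) (x : N) (pp : P) (q : ℕ) (n0 : Fin q → N) (n1 : Fin q → H),
      YN.coact x = ∑ l, n0 l ⊗ₜ[k] n1 l →
      ∀ (r : ℕ) (p0 : Fin r → P) (p1 : Fin r → H),
      YP.coact pp = ∑ t, p0 t ⊗ₜ[k] p1 t →
      cM_NP (m ⊗ₜ[k] (x ⊗ₜ[k] pp))
        = ∑ l, ∑ t, (YN.mu (n0 l) ⊗ₜ[k] YP.mu (p0 t)) ⊗ₜ[k]
            YM.act (B.symm (HH.mul (p1 t) (n1 l))) (YM.mu.symm m))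
    -- c_{M,N}
    (cMN : (M ⊗[k] N) →ₗ[k] (N ⊗[k] M))
    (hcMN : ∀ (m : M) (x : N) (q : ℕ) (n0 : Fin q → N) (n1 : Fin q → H),
      YN.coact x = ∑ l, n0 l ⊗ₜ[k] n1 l →
      cMN (m ⊗ₜ[k] x) = ∑ l, YN.mu (n0 l) ⊗ₜ[k] YM.act (B.symm (n1 l)) (YM.mu.symm m))
    -- c_{M,P}
    (cMP : (M ⊗[k] P) →ₗ[k] (P ⊗[k] M))
    (hcMP : ∀ (m : M) (pp : P) (r : ℕ) (p0 : Fin r → P) (p1 : Fin r → H),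
      YP.coact pp = ∑ t, p0 t ⊗ₜ[k] p1 t →
      cMP (m ⊗ₜ[k] pp) = ∑ t, YP.mu (p0 t) ⊗ₜ[k] YM.act (B.symm (p1 t)) (YM.mu.symm m)) :
    ∀ w : (M ⊗[k] N) ⊗[k] P,
      ((TensorProduct.map YN.mu.toLinearMap
          (TensorProduct.map LinearMap.id YM.mu.symm.toLinearMap)) ∘ₗ
        (TensorProduct.assoc k N P M).toLinearMap)
        (cM_NP
          (((TensorProduct.map YM.mu.toLinearMap
              (TensorProduct.map LinearMap.id YP.mu.symm.toLinearMap)) ∘ₗ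
            (TensorProduct.assoc k M N P).toLinearMap) w))
      = (TensorProduct.map LinearMap.id cMP)
          (((TensorProduct.map YN.mu.toLinearMap
              (TensorProduct.map LinearMap.id YP.mu.symm.toLinearMap)) ∘ₗ
            (TensorProduct.assoc k N M P).toLinearMap)
            ((TensorProduct.map cMN LinearMap.id) w)) :=
  stmt_15_general HH A B C D E F hB YM YN YP cM_NP hcM_NP cMN hcMN cMP hcMP
end

section
/- For A,B ∈ Aut_{mHH}(H), the vector space H_{(A,B)} = H with its algebra structure, left coaction ρ_l(h) = A(h₁)⊗h₂ and right coaction ρ_r(h) = h₁⊗B(h₂), is an H-Hom-bicomodule algebra: both coactions make H_{(A,B)} a Hom-comodule algebra and they satisfy the compatibility h₍₀₎[−1]⊗h₍₀₎[0]⊗α⁻¹(h₍₁₎) = α⁻¹(h[−1])⊗h[0]₍₀₎⊗h[0]₍₁₎. -/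
open TensorProduct

section AuxStmt19

variable {k : Type*} [Field k] {H : Type*} [AddCommGroup H] [Module k H]

lemma aux_map_map {M N P Q P' Q' : Type*}
    [AddCommGroup M] [Module k M] [AddCommGroup N] [Module k N]
    [AddCommGroup P] [Module k P] [AddCommGroup Q] [Module k Q]
    [AddCommGroup P'] [Module k P'] [AddCommGroup Q'] [Module k Q']
    (f : P →ₗ[k] P') (g : Q →ₗ[k] Q') (f' : M →ₗ[k] P) (g' : N →ₗ[k] Q) (t : M ⊗[k] N) :
    TensorProduct.map f g (TensorProduct.map f' g' t)
      = TensorProduct.map (f.comp f') (g.comp g') t := by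
  rw [← LinearMap.comp_apply, ← TensorProduct.map_comp]

lemma aux_a_symm (HH : HomHopf k H) {f : H ≃ₗ[k] H}
    (hf : ∀ x, f (HH.a x) = HH.a (f x)) (x : H) :
    f (HH.a.symm x) = HH.a.symm (f x) := by
  apply HH.a.injective
  rw [← hf, LinearEquiv.apply_symm_apply, LinearEquiv.apply_symm_apply]

lemma aux_comul_comp (HH : HomHopf k H) {A : H ≃ₗ[k] H} (hA : IsHomHopfAuto HH A) :
    HH.comul.comp A.toLinearMap
      = (TensorProduct.map A.toLinearMap A.toLinearMap).comp HH.comul :=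
  LinearMap.ext fun x => hA.map_comul x

lemma aux_comul_mul_sum (HH : HomHopf k H) (x y : H) (nx : ℕ) (x1 x2 : Fin nx → H)
    (hx : HH.comul x = ∑ i, x1 i ⊗ₜ[k] x2 i)
    (ny : ℕ) (y1 y2 : Fin ny → H)
    (hy : HH.comul y = ∑ j, y1 j ⊗ₜ[k] y2 j) :
    HH.comul (HH.mul x y)
      = ∑ i, ∑ j, HH.mul (x1 i) (y1 j) ⊗ₜ[k] HH.mul (x2 i) (y2 j) := by
  rw [HH.comul_mul, hx, hy]
  simp only [TensorProduct.sum_tmul, TensorProduct.tmul_sum, map_sum,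
    TensorProduct.tensorTensorTensorComm_tmul, TensorProduct.map_tmul,
    TensorProduct.lift.tmul]
  rw [Finset.sum_comm]

end AuxStmt19

theorem stmt_19' {k : Type*} [Field k] {H : Type*} [AddCommGroup H] [Module k H]
    (HH : HomHopf k H) (A B : H ≃ₗ[k] H)
    (hA : IsHomHopfAuto HH A) (hB : IsHomHopfAuto HH B)
    (rl rr : H →ₗ[k] H ⊗[k] H)
    (hrl : rl = (TensorProduct.map A.toLinearMap LinearMap.id).comp HH.comul)
    (hrr : rr = (TensorProduct.map LinearMap.id B.toLinearMap).comp HH.comul) :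
    (∀ (x y : H) (nx : ℕ) (x1 x2 : Fin nx → H), HH.comul x = ∑ i, x1 i ⊗ₜ[k] x2 i →
      ∀ (ny : ℕ) (y1 y2 : Fin ny → H), HH.comul y = ∑ j, y1 j ⊗ₜ[k] y2 j →
      rl (HH.mul x y) = ∑ i, ∑ j, HH.mul (A (x1 i)) (A (y1 j)) ⊗ₜ[k] HH.mul (x2 i) (y2 j) ∧
      rr (HH.mul x y) = ∑ i, ∑ j, HH.mul (x1 i) (y1 j) ⊗ₜ[k] HH.mul (B (x2 i)) (B (y2 j))) ∧
    rl HH.one = HH.one ⊗ₜ[k] HH.one ∧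
    rr HH.one = HH.one ⊗ₜ[k] HH.one ∧
    ((TensorProduct.map HH.comul HH.a.symm.toLinearMap).comp rl
      = (TensorProduct.assoc k H H H).symm.toLinearMap.comp
          ((TensorProduct.map HH.a.symm.toLinearMap rl).comp rl)) ∧
    (∀ x : H, (TensorProduct.lid k H)
        ((TensorProduct.map HH.counit LinearMap.id) (rl x)) = HH.a.symm x) ∧
    (∀ x : H, rl (HH.a x)
      = TensorProduct.map HH.a.toLinearMap HH.a.toLinearMap (rl x)) ∧
    ((TensorProduct.map HH.a.symm.toLinearMap HH.comul).comp rr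
      = (TensorProduct.assoc k H H H).toLinearMap.comp
          ((TensorProduct.map rr HH.a.symm.toLinearMap).comp rr)) ∧
    (∀ x : H, (TensorProduct.rid k H)
        ((TensorProduct.map LinearMap.id HH.counit) (rr x)) = HH.a.symm x) ∧
    (∀ x : H, rr (HH.a x)
      = TensorProduct.map HH.a.toLinearMap HH.a.toLinearMap (rr x)) ∧
    (∀ (h : H) (n : ℕ) (h1 h2 : Fin n → H), HH.comul h = ∑ i, h1 i ⊗ₜ[k] h2 i →
      ∀ (p : ℕ) (h11 h12 : Fin n → Fin p → H),
      (∀ i, HH.comul (h1 i) = ∑ j, h11 i j ⊗ₜ[k] h12 i j) →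
      ∀ (q : ℕ) (h21 h22 : Fin n → Fin q → H),
      (∀ i, HH.comul (h2 i) = ∑ j, h21 i j ⊗ₜ[k] h22 i j) →
      (∑ i, ∑ j, A (h11 i j) ⊗ₜ[k] (h12 i j ⊗ₜ[k] HH.a.symm (B (h2 i))))
        = ∑ i, ∑ j, HH.a.symm (A (h1 i)) ⊗ₜ[k] (h21 i j ⊗ₜ[k] B (h22 i j))) := by
  subst hrl hrr
  have haA := aux_a_symm HH hA.map_a
  have haB := aux_a_symm HH hB.map_a
  refine ⟨?_, ?_, ?_, ?_, ?_, ?_, ?_, ?_, ?_, ?_⟩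
  · intro x y nx x1 x2 hx ny y1 y2 hy
    have hc := aux_comul_mul_sum HH x y nx x1 x2 hx ny y1 y2 hy
    constructor
    · simp [hc, map_sum, hA.map_mul]
    · simp [hc, map_sum, hB.map_mul]
  · simp [HH.comul_one, hA.map_one]
  · simp [HH.comul_one, hB.map_one]
  · -- left coassoc
    apply LinearMap.ext; intro x
    have kx := LinearMap.congr_fun HH.hom_coassoc x
    simp only [LinearMap.comp_apply, LinearEquiv.coe_coe] at kx ⊢
    have kx' : TensorProduct.map HH.comul HH.a.symm.toLinearMap (HH.comul x)
        = (TensorProduct.assoc k H H H).symm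
            (TensorProduct.map HH.a.symm.toLinearMap HH.comul (HH.comul x)) := by
      rw [kx, LinearEquiv.symm_apply_apply]
    rw [aux_map_map, aux_map_map, aux_comul_comp HH hA]
    simp only [LinearMap.comp_id]
    rw [show TensorProduct.map ((TensorProduct.map A.toLinearMap A.toLinearMap).comp HH.comul)
          HH.a.symm.toLinearMap
        = (TensorProduct.map (TensorProduct.map A.toLinearMap A.toLinearMap)
            LinearMap.id).comp (TensorProduct.map HH.comul HH.a.symm.toLinearMap) from by
      rw [← TensorProduct.map_comp, LinearMap.id_comp]]
    rw [LinearMap.comp_apply, kx', TensorProduct.map_map_assoc_symm, aux_map_map,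
      show (A.toLinearMap ∘ₗ HH.a.symm.toLinearMap)
          = (HH.a.symm.toLinearMap ∘ₗ A.toLinearMap) from LinearMap.ext haA]
  · intro x
    simp only [LinearMap.comp_apply]
    rw [aux_map_map, LinearMap.id_comp,
      show HH.counit.comp A.toLinearMap = HH.counit from LinearMap.ext fun y => hA.map_counit y]
    exact HH.counit_comul x
  · intro x
    simp only [LinearMap.comp_apply]
    rw [HH.comul_a, aux_map_map, aux_map_map, LinearMap.id_comp, LinearMap.comp_id,
      show (A.toLinearMap ∘ₗ HH.a.toLinearMap)
          = (HH.a.toLinearMap ∘ₗ A.toLinearMap) from LinearMap.ext hA.map_a]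
  · -- right coassoc
    apply LinearMap.ext; intro x
    have kx := LinearMap.congr_fun HH.hom_coassoc x
    simp only [LinearMap.comp_apply, LinearEquiv.coe_coe] at kx ⊢
    rw [aux_map_map, aux_map_map,
      show HH.comul.comp B.toLinearMap
        = (TensorProduct.map B.toLinearMap B.toLinearMap).comp HH.comul from
        aux_comul_comp HH hB]
    simp only [LinearMap.comp_id]
    rw [show TensorProduct.map HH.a.symm.toLinearMap
          ((TensorProduct.map B.toLinearMap B.toLinearMap).comp HH.comul)
        = (TensorProduct.map LinearMap.id
            (TensorProduct.map B.toLinearMap B.toLinearMap)).comp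
            (TensorProduct.map HH.a.symm.toLinearMap HH.comul) from by
      rw [← TensorProduct.map_comp, LinearMap.id_comp]]
    rw [LinearMap.comp_apply, kx, TensorProduct.map_map_assoc, aux_map_map,
      show (B.toLinearMap ∘ₗ HH.a.symm.toLinearMap)
          = (HH.a.symm.toLinearMap ∘ₗ B.toLinearMap) from LinearMap.ext haB]
  · intro x
    simp only [LinearMap.comp_apply]
    rw [aux_map_map, LinearMap.comp_id,
      show HH.counit.comp B.toLinearMap = HH.counit from LinearMap.ext fun y => hB.map_counit y]
    exact HH.comul_counit x
  · intro x
    simp only [LinearMap.comp_apply]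
    rw [HH.comul_a, aux_map_map, aux_map_map, LinearMap.id_comp, LinearMap.comp_id,
      show (B.toLinearMap ∘ₗ HH.a.toLinearMap)
          = (HH.a.toLinearMap ∘ₗ B.toLinearMap) from LinearMap.ext hB.map_a]
  · intro h n h1 h2 hh p h11 h12 hh1 q h21 h22 hh2
    have kx := LinearMap.congr_fun HH.hom_coassoc h
    simp only [LinearMap.comp_apply, LinearEquiv.coe_coe] at kx
    rw [hh] at kx
    simp only [map_sum, TensorProduct.map_tmul, hh1, hh2, TensorProduct.tmul_sum,
      TensorProduct.sum_tmul, LinearEquiv.coe_coe, TensorProduct.assoc_tmul] at kx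
    have key := congrArg (TensorProduct.map A.toLinearMap
      (TensorProduct.map LinearMap.id B.toLinearMap)) kx
    simp only [map_sum, TensorProduct.map_tmul, TensorProduct.tmul_sum,
      LinearMap.id_coe, id_eq, LinearEquiv.coe_coe] at key
    calc (∑ i, ∑ j, A (h11 i j) ⊗ₜ[k] (h12 i j ⊗ₜ[k] HH.a.symm (B (h2 i))))
        = ∑ i, ∑ j, A (h11 i j) ⊗ₜ[k] (h12 i j ⊗ₜ[k] B (HH.a.symm (h2 i))) := by
          simp_rw [haB]
      _ = ∑ i, ∑ j, A (HH.a.symm (h1 i)) ⊗ₜ[k] (h21 i j ⊗ₜ[k] B (h22 i j)) := by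
          rw [← key]
      _ = ∑ i, ∑ j, HH.a.symm (A (h1 i)) ⊗ₜ[k] (h21 i j ⊗ₜ[k] B (h22 i j)) := by
          simp_rw [haA]

/-- Example 2.9: H_{(A,B)} = H with left coaction ρ_l(h) = A(h₁)⊗h₂ and right
coaction ρ_r(h) = h₁⊗B(h₂) is an H-Hom-bicomodule algebra: both coactions are
counital Hom-coassociative comodule structures compatible with α, both are
algebra maps, and the left/right compatibility condition holds. -/
theorem stmt_19 {k : Type*} [Field k] {H : Type*} [AddCommGroup H] [Module k H]
    (HH : HomHopf k H) (A B : H ≃ₗ[k] H)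
    (hA : IsHomHopfAuto HH A) (hB : IsHomHopfAuto HH B)
    (rl rr : H →ₗ[k] H ⊗[k] H)
    (hrl : rl = (TensorProduct.map A.toLinearMap LinearMap.id).comp HH.comul)
    (hrr : rr = (TensorProduct.map LinearMap.id B.toLinearMap).comp HH.comul) :
    -- both coactions are multiplicative (Hom-comodule algebra condition) and unital
    (∀ (x y : H) (nx : ℕ) (x1 x2 : Fin nx → H), HH.comul x = ∑ i, x1 i ⊗ₜ[k] x2 i →
      ∀ (ny : ℕ) (y1 y2 : Fin ny → H), HH.comul y = ∑ j, y1 j ⊗ₜ[k] y2 j →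
      rl (HH.mul x y) = ∑ i, ∑ j, HH.mul (A (x1 i)) (A (y1 j)) ⊗ₜ[k] HH.mul (x2 i) (y2 j) ∧
      rr (HH.mul x y) = ∑ i, ∑ j, HH.mul (x1 i) (y1 j) ⊗ₜ[k] HH.mul (B (x2 i)) (B (y2 j))) ∧
    rl HH.one = HH.one ⊗ₜ[k] HH.one ∧
    rr HH.one = HH.one ⊗ₜ[k] HH.one ∧
    -- left Hom-comodule axioms
    ((TensorProduct.map HH.comul HH.a.symm.toLinearMap).comp rl
      = (TensorProduct.assoc k H H H).symm.toLinearMap.comp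
          ((TensorProduct.map HH.a.symm.toLinearMap rl).comp rl)) ∧
    (∀ x : H, (TensorProduct.lid k H)
        ((TensorProduct.map HH.counit LinearMap.id) (rl x)) = HH.a.symm x) ∧
    (∀ x : H, rl (HH.a x)
      = TensorProduct.map HH.a.toLinearMap HH.a.toLinearMap (rl x)) ∧
    -- right Hom-comodule axioms
    ((TensorProduct.map HH.a.symm.toLinearMap HH.comul).comp rr
      = (TensorProduct.assoc k H H H).toLinearMap.comp
          ((TensorProduct.map rr HH.a.symm.toLinearMap).comp rr)) ∧
    (∀ x : H, (TensorProduct.rid k H)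
        ((TensorProduct.map LinearMap.id HH.counit) (rr x)) = HH.a.symm x) ∧
    (∀ x : H, rr (HH.a x)
      = TensorProduct.map HH.a.toLinearMap HH.a.toLinearMap (rr x)) ∧
    -- compatibility: n₍₀₎[−1] ⊗ n₍₀₎[0] ⊗ α⁻¹(n₍₁₎) = α⁻¹(n[−1]) ⊗ n[0]₍₀₎ ⊗ n[0]₍₁₎
    (∀ (h : H) (n : ℕ) (h1 h2 : Fin n → H), HH.comul h = ∑ i, h1 i ⊗ₜ[k] h2 i →
      ∀ (p : ℕ) (h11 h12 : Fin n → Fin p → H),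
      (∀ i, HH.comul (h1 i) = ∑ j, h11 i j ⊗ₜ[k] h12 i j) →
      ∀ (q : ℕ) (h21 h22 : Fin n → Fin q → H),
      (∀ i, HH.comul (h2 i) = ∑ j, h21 i j ⊗ₜ[k] h22 i j) →
      (∑ i, ∑ j, A (h11 i j) ⊗ₜ[k] (h12 i j ⊗ₜ[k] HH.a.symm (B (h2 i))))
        = ∑ i, ∑ j, HH.a.symm (A (h1 i)) ⊗ₜ[k] (h21 i j ⊗ₜ[k] B (h22 i j))) := stmt_19' HH A B hA hB rl rr hrl hrr
end
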